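/- arXiv:2406.00466 — 7 statements merged into one kernel-verified Lean document; each statement's English description precedes it below -/
import Mathlib

section
/- Let $(\mathcal{G}_1, \mathcal{G}_2)$ be a matched pair of groupoids. Then for all composable $(g,x) \in \mathcal{G}_2 \tensor[_s]{\times}{_r} \mathcal{G}_1$: $(g \triangleright x)^{-1} = (g \triangleleft x) \triangleright x^{-1}$ and $(g \triangleleft x)^{-1} = g^{-1} \triangleleft (g \triangleright x)$. -/
/-- A (discrete, algebraic) groupoid over a unit space `U`, with arrows `G`.
The multiplication and inversion are given as total functions; all axioms are
conditioned on composability `s g = r h`. -/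
structure Gpd (U : Type*) (G : Type*) where
  r : G → U
  s : G → U
  mul : G → G → G
  inv : G → G
  unit : U → G
  r_unit : ∀ u, r (unit u) = u
  s_unit : ∀ u, s (unit u) = u
  r_mul : ∀ g h, s g = r h → r (mul g h) = r g
  s_mul : ∀ g h, s g = r h → s (mul g h) = s h
  mul_assoc : ∀ g h k, s g = r h → s h = r k → mul (mul g h) k = mul g (mul h k)
  unit_mul : ∀ g, mul (unit (r g)) g = g
  mul_unit : ∀ g, mul g (unit (s g)) = g
  r_inv : ∀ g, r (inv g) = s g
  s_inv : ∀ g, s (inv g) = r g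
  mul_inv : ∀ g, mul g (inv g) = unit (r g)
  inv_mul : ∀ g, mul (inv g) g = unit (s g)

/-- A matched pair of groupoids `(𝒢₁, 𝒢₂)` over a common unit space `U`:
an action map `act = ▷ : 𝒢₂ ×ₛᵣ 𝒢₁ → 𝒢₁` and a restriction map
`res = ◁ : 𝒢₂ ×ₛᵣ 𝒢₁ → 𝒢₂` satisfying (ZS1)–(ZS9). -/
structure MatchedPair {U G₁ G₂ : Type*} (𝒢₁ : Gpd U G₁) (𝒢₂ : Gpd U G₂) where
  act : G₂ → G₁ → G₁
  res : G₂ → G₁ → G₂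
  zs1 : ∀ h g x, 𝒢₂.s h = 𝒢₂.r g → 𝒢₂.s g = 𝒢₁.r x →
    act (𝒢₂.mul h g) x = act h (act g x)
  zs2 : ∀ g x, 𝒢₂.s g = 𝒢₁.r x → 𝒢₁.r (act g x) = 𝒢₂.r g
  zs3 : ∀ x, act (𝒢₂.unit (𝒢₁.r x)) x = x
  zs4 : ∀ g x y, 𝒢₂.s g = 𝒢₁.r x → 𝒢₁.s x = 𝒢₁.r y →
    res g (𝒢₁.mul x y) = res (res g x) y
  zs5 : ∀ g x, 𝒢₂.s g = 𝒢₁.r x → 𝒢₂.s (res g x) = 𝒢₁.s x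
  zs6 : ∀ g, res g (𝒢₁.unit (𝒢₂.s g)) = g
  zs7 : ∀ g x, 𝒢₂.s g = 𝒢₁.r x → 𝒢₁.s (act g x) = 𝒢₂.r (res g x)
  zs8 : ∀ g x y, 𝒢₂.s g = 𝒢₁.r x → 𝒢₁.s x = 𝒢₁.r y →
    act g (𝒢₁.mul x y) = 𝒢₁.mul (act g x) (act (res g x) y)
  zs9 : ∀ h g x, 𝒢₂.s h = 𝒢₂.r g → 𝒢₂.s g = 𝒢₁.r x →
    res (𝒢₂.mul h g) x = 𝒢₂.mul (res h (act g x)) (res g x)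


namespace Gpd

variable {U G : Type*}

lemma idem_eq_unit (𝒢 : Gpd U G) (a : G) (hs : 𝒢.s a = 𝒢.r a)
    (hm : 𝒢.mul a a = a) : a = 𝒢.unit (𝒢.s a) := by
  have h1 : 𝒢.mul (𝒢.inv a) (𝒢.mul a a) = 𝒢.mul (𝒢.inv a) a := by rw [hm]
  rw [← 𝒢.mul_assoc _ _ _ (by rw [𝒢.s_inv]) hs, 𝒢.inv_mul, hs, 𝒢.unit_mul] at h1
  rw [hs]; exact h1

lemma eq_inv_of_mul (𝒢 : Gpd U G) (a b : G) (h : 𝒢.s a = 𝒢.r b)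
    (hm : 𝒢.mul a b = 𝒢.unit (𝒢.r a)) : b = 𝒢.inv a := by
  have h1 := 𝒢.mul_assoc (𝒢.inv a) a b (by rw [𝒢.s_inv]) h
  rw [𝒢.inv_mul, h, 𝒢.unit_mul, hm] at h1
  rw [h1, ← 𝒢.s_inv, 𝒢.mul_unit]

lemma inv_eq_of_mul (𝒢 : Gpd U G) (a b : G) (h : 𝒢.s b = 𝒢.r a)
    (hm : 𝒢.mul b a = 𝒢.unit (𝒢.s a)) : b = 𝒢.inv a := by
  have h1 := 𝒢.mul_assoc b a (𝒢.inv a) h (by rw [𝒢.r_inv])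
  rw [hm, 𝒢.mul_inv, ← 𝒢.r_inv, 𝒢.unit_mul, ← h, 𝒢.mul_unit] at h1
  exact h1.symm

end Gpd

section Aux

variable {U G₁ G₂ : Type*} (𝒢₁ : Gpd U G₁) (𝒢₂ : Gpd U G₂)
  (M : MatchedPair 𝒢₁ 𝒢₂)

lemma MatchedPair.act_unit (g : G₂) :
    M.act g (𝒢₁.unit (𝒢₂.s g)) = 𝒢₁.unit (𝒢₂.r g) := by
  set u := 𝒢₁.unit (𝒢₂.s g) with hu
  have hc : 𝒢₂.s g = 𝒢₁.r u := by rw [hu, 𝒢₁.r_unit]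
  have huu : 𝒢₁.mul u u = u := by
    have := 𝒢₁.mul_unit u
    rwa [hu, 𝒢₁.s_unit] at this
  set a := M.act g u with ha
  have hmm : 𝒢₁.mul a a = a := by
    have h8 := M.zs8 g u u hc (by rw [hu, 𝒢₁.s_unit, 𝒢₁.r_unit])
    rw [huu, M.zs6] at h8
    exact h8.symm
  have hsa : 𝒢₁.s a = 𝒢₂.r g := by rw [ha, M.zs7 g u hc, M.zs6]
  have hra : 𝒢₁.r a = 𝒢₂.r g := M.zs2 g u hc
  have := 𝒢₁.idem_eq_unit a (by rw [hsa, hra]) hmm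
  rw [this, hsa]

lemma MatchedPair.unit_res (x : G₁) :
    M.res (𝒢₂.unit (𝒢₁.r x)) x = 𝒢₂.unit (𝒢₁.s x) := by
  set e := 𝒢₂.unit (𝒢₁.r x) with he
  have hc : 𝒢₂.s e = 𝒢₁.r x := by rw [he, 𝒢₂.s_unit]
  have hee : 𝒢₂.mul e e = e := by
    have := 𝒢₂.mul_unit e
    rwa [he, 𝒢₂.s_unit] at this
  set u := M.res e x with hu
  have hmm : 𝒢₂.mul u u = u := by
    have h9 := M.zs9 e e x (by rw [he, 𝒢₂.s_unit, 𝒢₂.r_unit]) hc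
    rw [hee, he, M.zs3] at h9
    exact h9.symm
  have hsu : 𝒢₂.s u = 𝒢₁.s x := M.zs5 e x hc
  have hru : 𝒢₂.r u = 𝒢₁.s x := by
    have := M.zs7 e x hc
    rw [he, M.zs3] at this
    exact this.symm
  have := 𝒢₂.idem_eq_unit u (by rw [hsu, hru]) hmm
  rw [this, hsu]

end Aux

/-- In a matched pair of groupoids one has, for composable `(g,x)`,
(ZS12) `(g ▷ x)⁻¹ = (g ◁ x) ▷ x⁻¹` and (ZS13) `(g ◁ x)⁻¹ = g⁻¹ ◁ (g ▷ x)`. -/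
theorem matchedPair_inv_act_inv_res
    {U G₁ G₂ : Type*} (𝒢₁ : Gpd U G₁) (𝒢₂ : Gpd U G₂)
    (M : MatchedPair 𝒢₁ 𝒢₂) :
    ∀ g x, 𝒢₂.s g = 𝒢₁.r x →
      𝒢₁.inv (M.act g x) = M.act (M.res g x) (𝒢₁.inv x) ∧
      𝒢₂.inv (M.res g x) = M.res (𝒢₂.inv g) (M.act g x) := by
  intro g x hgx
  have hrinv : 𝒢₁.r (𝒢₁.inv x) = 𝒢₁.s x := 𝒢₁.r_inv x
  have hres_s : 𝒢₂.s (M.res g x) = 𝒢₁.s x := M.zs5 g x hgx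
  have hc2 : 𝒢₂.s (M.res g x) = 𝒢₁.r (𝒢₁.inv x) := by rw [hres_s, hrinv]
  constructor
  · -- ZS12
    symm
    apply 𝒢₁.eq_inv_of_mul
    · rw [M.zs7 g x hgx, (M.zs2 (M.res g x) (𝒢₁.inv x) hc2)]
    · have h8 := M.zs8 g x (𝒢₁.inv x) hgx (by rw [hrinv])
      rw [𝒢₁.mul_inv, ← hgx, M.act_unit] at h8
      rw [M.zs2 g x hgx]
      exact h8.symm
  · -- ZS13
    symm
    apply 𝒢₂.inv_eq_of_mul
    · have h1 : 𝒢₂.s (𝒢₂.inv g) = 𝒢₁.r (M.act g x) := by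
        rw [𝒢₂.s_inv, M.zs2 g x hgx]
      rw [M.zs5 (𝒢₂.inv g) (M.act g x) h1, M.zs7 g x hgx]
    · have h9 := M.zs9 (𝒢₂.inv g) g x (by rw [𝒢₂.s_inv]) hgx
      rw [𝒢₂.inv_mul, hgx, M.unit_res] at h9
      rw [hres_s]
      exact h9.symm
end

section
/- Let $(\mathcal{G}_1, \mathcal{G}_2)$ be a matched pair of groupoids. Then the fibred product $\mathcal{G}_1 \tensor[_s]{\times}{_r} \mathcal{G}_2$ with multiplication $(y,g)(x,h) = (y(g\triangleright x), (g\triangleleft x)h)$ (defined when $s(g) = r(x)$) and inversion $(y,g)^{-1} = (g^{-1}\triangleright y^{-1}, g^{-1}\triangleleft y^{-1})$ is a groupoid with unit space $\{(u,u) : u \in \mathcal{U}\}$; in particular the multiplication is associative. -/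
-- AUX START
open Classical

theorem Gpd.of_idem {U G : Type*} (𝒢 : Gpd U G) (e : G) (hr : 𝒢.r e = 𝒢.s e)
    (h : 𝒢.mul e e = e) : e = 𝒢.unit (𝒢.s e) := by
  have h2 := 𝒢.mul_assoc (𝒢.inv e) e e (𝒢.s_inv e) hr.symm
  rw [h, 𝒢.inv_mul e] at h2
  -- h2 : mul (unit (s e)) e = unit (s e)  after rewriting inv_mul on RHS
  have h3 : 𝒢.mul (𝒢.unit (𝒢.s e)) e = e := by
    rw [← hr]; exact 𝒢.unit_mul e
  rw [h3] at h2; exact h2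

theorem Gpd.mul_unit_unit {U G : Type*} (𝒢 : Gpd U G) (u : U) :
    𝒢.mul (𝒢.unit u) (𝒢.unit u) = 𝒢.unit u := by
  have h := 𝒢.unit_mul (𝒢.unit u)
  rw [𝒢.r_unit] at h
  exact h

theorem MatchedPair.res_unit_left {U G₁ G₂ : Type*} {𝒢₁ : Gpd U G₁} {𝒢₂ : Gpd U G₂}
    (M : MatchedPair 𝒢₁ 𝒢₂) (x : G₁) :
    M.res (𝒢₂.unit (𝒢₁.r x)) x = 𝒢₂.unit (𝒢₁.s x) := by
  set u := 𝒢₁.r x with hu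
  have hsu : 𝒢₂.s (𝒢₂.unit u) = 𝒢₁.r x := by rw [𝒢₂.s_unit]
  have h9 := M.zs9 (𝒢₂.unit u) (𝒢₂.unit u) x (by rw [𝒢₂.s_unit, 𝒢₂.r_unit]) hsu
  rw [𝒢₂.mul_unit_unit, hu, M.zs3] at h9
  set e := M.res (𝒢₂.unit u) x with he
  have hse : 𝒢₂.s e = 𝒢₁.s x := M.zs5 _ _ hsu
  have hre : 𝒢₂.r e = 𝒢₁.s x := by
    have := M.zs7 (𝒢₂.unit u) x hsu
    rw [hu, M.zs3] at this; exact this.symm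
  have := 𝒢₂.of_idem e (by rw [hre, hse]) h9.symm
  rw [hse] at this; exact this

theorem MatchedPair.act_unit_right {U G₁ G₂ : Type*} {𝒢₁ : Gpd U G₁} {𝒢₂ : Gpd U G₂}
    (M : MatchedPair 𝒢₁ 𝒢₂) (g : G₂) :
    M.act g (𝒢₁.unit (𝒢₂.s g)) = 𝒢₁.unit (𝒢₂.r g) := by
  set u := 𝒢₂.s g with hu
  have hsu : 𝒢₂.s g = 𝒢₁.r (𝒢₁.unit u) := by rw [𝒢₁.r_unit]
  have h8 := M.zs8 g (𝒢₁.unit u) (𝒢₁.unit u) hsu (by rw [𝒢₁.s_unit, 𝒢₁.r_unit])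
  rw [𝒢₁.mul_unit_unit, hu, M.zs6] at h8
  set f := M.act g (𝒢₁.unit u) with hf
  have hrf : 𝒢₁.r f = 𝒢₂.r g := M.zs2 _ _ hsu
  have hsf : 𝒢₁.s f = 𝒢₂.r g := by
    have := M.zs7 g (𝒢₁.unit u) hsu
    rw [hu, M.zs6] at this; exact this
  have := 𝒢₁.of_idem f (by rw [hrf, hsf]) h8.symm
  rw [hsf] at this; exact this

section Construction

variable {U G₁ G₂ : Type*} (𝒢₁ : Gpd U G₁) (𝒢₂ : Gpd U G₂) (M : MatchedPair 𝒢₁ 𝒢₂)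

theorem zs_mul_mem (p q : {p : G₁ × G₂ // 𝒢₁.s p.1 = 𝒢₂.r p.2})
    (h : 𝒢₂.s p.1.2 = 𝒢₁.r q.1.1) :
    𝒢₁.s (𝒢₁.mul p.1.1 (M.act p.1.2 q.1.1)) =
      𝒢₂.r (𝒢₂.mul (M.res p.1.2 q.1.1) q.1.2) := by
  rw [𝒢₁.s_mul _ _ (by rw [M.zs2 _ _ h]; exact p.2),
    𝒢₂.r_mul _ _ (by rw [M.zs5 _ _ h]; exact q.2), M.zs7 _ _ h]

theorem zs_inv_mem (p : {p : G₁ × G₂ // 𝒢₁.s p.1 = 𝒢₂.r p.2}) :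
    𝒢₁.s (M.act (𝒢₂.inv p.1.2) (𝒢₁.inv p.1.1)) =
      𝒢₂.r (M.res (𝒢₂.inv p.1.2) (𝒢₁.inv p.1.1)) :=
  M.zs7 _ _ (by rw [𝒢₂.s_inv, 𝒢₁.r_inv]; exact p.2.symm)

end Construction
-- AUX END

/-- The fibred product `𝒢₁ ×ₛᵣ 𝒢₂` of a matched pair carries a
groupoid structure with multiplication `(y,g)(x,h) = (y(g ▷ x), (g ◁ x)h)`,
inversion `(y,g)⁻¹ = (g⁻¹ ▷ y⁻¹, g⁻¹ ◁ y⁻¹)`, and unit space `{(u,u) : u ∈ U}`. -/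
theorem zs_product_is_groupoid
    {U G₁ G₂ : Type*} (𝒢₁ : Gpd U G₁) (𝒢₂ : Gpd U G₂)
    (M : MatchedPair 𝒢₁ 𝒢₂) :
    ∃ 𝒢 : Gpd U {p : G₁ × G₂ // 𝒢₁.s p.1 = 𝒢₂.r p.2},
      (∀ p, 𝒢.r p = 𝒢₁.r p.1.1) ∧
      (∀ p, 𝒢.s p = 𝒢₂.s p.1.2) ∧
      (∀ p q, 𝒢.s p = 𝒢.r q →
        (𝒢.mul p q).1 =
          (𝒢₁.mul p.1.1 (M.act p.1.2 q.1.1), 𝒢₂.mul (M.res p.1.2 q.1.1) q.1.2)) ∧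
      (∀ p, (𝒢.inv p).1 =
          (M.act (𝒢₂.inv p.1.2) (𝒢₁.inv p.1.1), M.res (𝒢₂.inv p.1.2) (𝒢₁.inv p.1.1))) ∧
      (∀ u, (𝒢.unit u).1 = (𝒢₁.unit u, 𝒢₂.unit u)) := by
  classical
  refine ⟨{
    r := fun p => 𝒢₁.r p.1.1
    s := fun p => 𝒢₂.s p.1.2
    mul := fun p q =>
      if h : 𝒢₂.s p.1.2 = 𝒢₁.r q.1.1 then
        ⟨(𝒢₁.mul p.1.1 (M.act p.1.2 q.1.1), 𝒢₂.mul (M.res p.1.2 q.1.1) q.1.2),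
          zs_mul_mem 𝒢₁ 𝒢₂ M p q h⟩
      else p
    inv := fun p => ⟨(M.act (𝒢₂.inv p.1.2) (𝒢₁.inv p.1.1),
        M.res (𝒢₂.inv p.1.2) (𝒢₁.inv p.1.1)), zs_inv_mem 𝒢₁ 𝒢₂ M p⟩
    unit := fun u => ⟨(𝒢₁.unit u, 𝒢₂.unit u), by rw [𝒢₁.s_unit, 𝒢₂.r_unit]⟩
    r_unit := fun u => 𝒢₁.r_unit u
    s_unit := fun u => 𝒢₂.s_unit u
    r_mul := ?_
    s_mul := ?_
    mul_assoc := ?_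
    unit_mul := ?_
    mul_unit := ?_
    r_inv := ?_
    s_inv := ?_
    mul_inv := ?_
    inv_mul := ?_ }, fun p => rfl, fun p => rfl, ?_, fun p => rfl, fun u => rfl⟩
  · -- r_mul
    intro p q hc
    rw [dif_pos hc]
    exact 𝒢₁.r_mul _ _ (by rw [M.zs2 _ _ hc]; exact p.2)
  · -- s_mul
    intro p q hc
    rw [dif_pos hc]
    exact 𝒢₂.s_mul _ _ (by rw [M.zs5 _ _ hc]; exact q.2)
  · -- mul_assoc
    intro p q t hpq hqt
    obtain ⟨⟨y, g⟩, hy⟩ := p; obtain ⟨⟨x, h⟩, hx⟩ := q; obtain ⟨⟨w, k⟩, hw⟩ := t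
    dsimp only at hpq hqt hy hx hw ⊢
    rw [dif_pos hpq, dif_pos hqt]
    have c1 : 𝒢₂.s (M.res g x) = 𝒢₂.r h := by rw [M.zs5 _ _ hpq]; exact hx
    have c2 : 𝒢₁.s x = 𝒢₁.r (M.act h w) := by rw [M.zs2 _ _ hqt]; exact hx
    have c3 : 𝒢₂.s (M.res g x) = 𝒢₁.r (M.act h w) := by
      rw [M.zs5 _ _ hpq, M.zs2 _ _ hqt]; exact hx
    have cL : 𝒢₂.s (𝒢₂.mul (M.res g x) h) = 𝒢₁.r w := by
      rw [𝒢₂.s_mul _ _ c1]; exact hqt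
    have cR : 𝒢₂.s g = 𝒢₁.r (𝒢₁.mul x (M.act h w)) := by
      rw [𝒢₁.r_mul _ _ c2]; exact hpq
    rw [dif_pos cL, dif_pos cR]
    refine Subtype.ext (Prod.ext ?_ ?_) <;> dsimp only
    · rw [M.zs1 _ _ _ c1 hqt, M.zs8 g x (M.act h w) hpq c2]
      refine 𝒢₁.mul_assoc _ _ _ ?_ ?_
      · rw [M.zs2 _ _ hpq]; exact hy
      · rw [M.zs7 _ _ hpq, M.zs2 _ _ c3]
    · rw [M.zs9 _ _ _ c1 hqt, M.zs4 g x (M.act h w) hpq c2]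
      refine 𝒢₂.mul_assoc _ _ _ ?_ ?_
      · rw [M.zs5 _ _ c3, M.zs7 _ _ hqt]
      · rw [M.zs5 _ _ hqt]; exact hw
  · -- unit_mul
    intro p
    obtain ⟨⟨y, g⟩, hy⟩ := p
    dsimp only
    have hc : 𝒢₂.s (𝒢₂.unit (𝒢₁.r y)) = 𝒢₁.r y := 𝒢₂.s_unit _
    rw [dif_pos hc]
    refine Subtype.ext (Prod.ext ?_ ?_) <;> dsimp only
    · rw [M.zs3 y, 𝒢₁.unit_mul]
    · rw [M.res_unit_left y, hy, 𝒢₂.unit_mul]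
  · -- mul_unit
    intro p
    obtain ⟨⟨y, g⟩, hy⟩ := p
    dsimp only
    have hc : 𝒢₂.s g = 𝒢₁.r (𝒢₁.unit (𝒢₂.s g)) := (𝒢₁.r_unit _).symm
    rw [dif_pos hc]
    refine Subtype.ext (Prod.ext ?_ ?_) <;> dsimp only
    · rw [M.act_unit_right g, ← hy, 𝒢₁.mul_unit]
    · rw [M.zs6 g, 𝒢₂.mul_unit]
  · -- r_inv
    intro p
    obtain ⟨⟨y, g⟩, hy⟩ := p
    dsimp only
    rw [M.zs2 _ _ (by rw [𝒢₂.s_inv, 𝒢₁.r_inv]; exact hy.symm), 𝒢₂.r_inv]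
  · -- s_inv
    intro p
    obtain ⟨⟨y, g⟩, hy⟩ := p
    dsimp only
    rw [M.zs5 _ _ (by rw [𝒢₂.s_inv, 𝒢₁.r_inv]; exact hy.symm), 𝒢₁.s_inv]
  · -- mul_inv
    intro p
    obtain ⟨⟨y, g⟩, hy⟩ := p
    dsimp only
    have cinv : 𝒢₂.s (𝒢₂.inv g) = 𝒢₁.r (𝒢₁.inv y) := by
      rw [𝒢₂.s_inv, 𝒢₁.r_inv]; exact hy.symm
    have hc : 𝒢₂.s g = 𝒢₁.r (M.act (𝒢₂.inv g) (𝒢₁.inv y)) := by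
      rw [M.zs2 _ _ cinv, 𝒢₂.r_inv]
    rw [dif_pos hc]
    have hgg : 𝒢₂.s g = 𝒢₂.r (𝒢₂.inv g) := (𝒢₂.r_inv g).symm
    refine Subtype.ext (Prod.ext ?_ ?_) <;> dsimp only
    · rw [← M.zs1 _ _ _ hgg cinv, 𝒢₂.mul_inv]
      have : 𝒢₂.r g = 𝒢₁.r (𝒢₁.inv y) := by rw [𝒢₁.r_inv]; exact hy.symm
      rw [this, M.zs3, 𝒢₁.mul_inv]
    · rw [← M.zs9 _ _ _ hgg cinv, 𝒢₂.mul_inv]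
      have : 𝒢₂.r g = 𝒢₁.r (𝒢₁.inv y) := by rw [𝒢₁.r_inv]; exact hy.symm
      rw [this, M.res_unit_left, 𝒢₁.s_inv]
  · -- inv_mul
    intro p
    obtain ⟨⟨y, g⟩, hy⟩ := p
    dsimp only
    have cinv : 𝒢₂.s (𝒢₂.inv g) = 𝒢₁.r (𝒢₁.inv y) := by
      rw [𝒢₂.s_inv, 𝒢₁.r_inv]; exact hy.symm
    have hc : 𝒢₂.s (M.res (𝒢₂.inv g) (𝒢₁.inv y)) = 𝒢₁.r y := by
      rw [M.zs5 _ _ cinv, 𝒢₁.s_inv]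
    rw [dif_pos hc]
    have hyy : 𝒢₁.s (𝒢₁.inv y) = 𝒢₁.r y := 𝒢₁.s_inv y
    have hsy : 𝒢₁.unit (𝒢₁.s y) = 𝒢₁.unit (𝒢₂.s (𝒢₂.inv g)) := by
      rw [𝒢₂.s_inv]; exact congrArg _ hy
    refine Subtype.ext (Prod.ext ?_ ?_) <;> dsimp only
    · rw [← M.zs8 _ _ _ cinv hyy, 𝒢₁.inv_mul, hsy, M.act_unit_right, 𝒢₂.r_inv]
    · rw [← M.zs4 _ _ _ cinv hyy, 𝒢₁.inv_mul, hsy, M.zs6, 𝒢₂.inv_mul]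
  · -- mul formula
    intro p q hc
    dsimp only at hc ⊢
    rw [dif_pos hc]
end

section
/- Let $(\mathcal{G}_1, \mathcal{G}_2)$ be a matched pair of topological groupoids such that the Zappa–Szép product $\mathcal{G}_1 \bowtie \mathcal{G}_2$ is $r$-discrete (its unit space is open). Then both $\mathcal{G}_1$ and $\mathcal{G}_2$ are $r$-discrete. -/
/-- If the Zappa–Szép product of a matched pair of topological
groupoids is `r`-discrete (its unit space is open), then both factors are
`r`-discrete. The product carries the subspace topology of `G₁ × G₂`,
and its unit space is `{(u,u) : u ∈ U}`. -/
theorem zs_product_rDiscrete_implies_factors_rDiscrete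
    {U G₁ G₂ : Type*} [TopologicalSpace G₁] [TopologicalSpace G₂]
    (𝒢₁ : Gpd U G₁) (𝒢₂ : Gpd U G₂)
    (M : MatchedPair 𝒢₁ 𝒢₂)
    (hr₁ : Continuous (fun x => 𝒢₂.unit (𝒢₁.r x)))
    (hs₁ : Continuous (fun x => 𝒢₂.unit (𝒢₁.s x)))
    (hr₂ : Continuous (fun g => 𝒢₁.unit (𝒢₂.r g)))
    (hs₂ : Continuous (fun g => 𝒢₁.unit (𝒢₂.s g)))
    (hact : Continuous (fun q : {q : G₂ × G₁ // 𝒢₂.s q.1 = 𝒢₁.r q.2} =>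
      M.act q.1.1 q.1.2))
    (hres : Continuous (fun q : {q : G₂ × G₁ // 𝒢₂.s q.1 = 𝒢₁.r q.2} =>
      M.res q.1.1 q.1.2))
    (hOpen : IsOpen {p : {p : G₁ × G₂ // 𝒢₁.s p.1 = 𝒢₂.r p.2} |
      ∃ u, p.1 = (𝒢₁.unit u, 𝒢₂.unit u)}) :
    IsOpen (Set.range 𝒢₁.unit) ∧ IsOpen (Set.range 𝒢₂.unit) := by
  constructor
  · -- embed G₁ via x ↦ (x, unit (s x))
    have hf : Continuous (fun x : G₁ =>
        (⟨(x, 𝒢₂.unit (𝒢₁.s x)), by simp [𝒢₂.r_unit]⟩ :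
          {p : G₁ × G₂ // 𝒢₁.s p.1 = 𝒢₂.r p.2})) :=
      Continuous.subtype_mk (continuous_id.prodMk hs₁) _
    have := hOpen.preimage hf
    convert this using 1
    ext x
    simp only [Set.mem_preimage, Set.mem_setOf_eq, Set.mem_range, Prod.mk.injEq]
    constructor
    · rintro ⟨u, rfl⟩
      exact ⟨u, rfl, by rw [𝒢₁.s_unit]⟩
    · rintro ⟨u, hx, -⟩
      exact ⟨u, hx.symm⟩
  · -- embed G₂ via g ↦ (unit (r g), g)
    have hf : Continuous (fun g : G₂ =>
        (⟨(𝒢₁.unit (𝒢₂.r g), g), by simp [𝒢₁.s_unit]⟩ :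
          {p : G₁ × G₂ // 𝒢₁.s p.1 = 𝒢₂.r p.2})) :=
      Continuous.subtype_mk (hr₂.prodMk continuous_id) _
    have := hOpen.preimage hf
    convert this using 1
    ext g
    simp only [Set.mem_preimage, Set.mem_setOf_eq, Set.mem_range, Prod.mk.injEq]
    constructor
    · rintro ⟨u, rfl⟩
      exact ⟨u, by rw [𝒢₂.r_unit], rfl⟩
    · rintro ⟨u, -, hg⟩
      exact ⟨u, hg.symm⟩
end

section
/- Let $c$ be a normalized 2-cocycle on a groupoid $\mathcal{G} = \mathcal{G}_1 \bowtie \mathcal{G}_2$ a Zappa–Szép product of subgroupoids $\mathcal{G}_1, \mathcal{G}_2$. Define $\varphi: \mathcal{G}_2 \tensor[_s]{\times}{_r} \mathcal{G}_1 \to \mathbb{T}$ by $\varphi(g,x) = c(g,x)\,\overline{c(g\triangleright x, g\triangleleft x)}$. Then $\varphi$ satisfies condition (CC2), i.e., for all $g \in \mathcal{G}_2$ and composable $(x,y) \in \mathcal{G}_1^{(2)}$ with $s(g) = r(x)$: $\varphi(g,xy)\,c(x,y) = \varphi(g,x)\,\varphi(g\triangleleft x, y)\,c(g\triangleright x, (g\triangleleft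 x)\triangleright y)$. -/
variable {U G₁ G₂ : Type*}

/-- The Zappa–Szép multiplication `(x₁,g₁)(x₂,g₂) = (x₁(g₁ ▷ x₂), (g₁ ◁ x₂)g₂)`
on `G₁ × G₂`. -/
def zsMul (𝒢₁ : Gpd U G₁) (𝒢₂ : Gpd U G₂) (M : MatchedPair 𝒢₁ 𝒢₂)
    (p q : G₁ × G₂) : G₁ × G₂ :=
  (𝒢₁.mul p.1 (M.act p.2 q.1), 𝒢₂.mul (M.res p.2 q.1) q.2)

/-- The canonical embedding `𝒢₁ → 𝒢₁ ⋈ 𝒢₂`, `x ↦ (x, s(x))`. -/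
def iota₁ (𝒢₁ : Gpd U G₁) (𝒢₂ : Gpd U G₂) (x : G₁) : G₁ × G₂ :=
  (x, 𝒢₂.unit (𝒢₁.s x))

/-- The canonical embedding `𝒢₂ → 𝒢₁ ⋈ 𝒢₂`, `g ↦ (r(g), g)`. -/
def iota₂ (𝒢₁ : Gpd U G₁) (𝒢₂ : Gpd U G₂) (g : G₂) : G₁ × G₂ :=
  (𝒢₁.unit (𝒢₂.r g), g)

/-- Given a 2-cocycle `c` on the Zappa–Szép product `𝒢₁ ⋈ 𝒢₂`, the induced map
`φ(g,x) = c(g,x) ⋅ conj (c(g ▷ x, g ◁ x))` (conjugation in `𝕋` is inversion),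
where `g, x` and `g ▷ x, g ◁ x` are viewed in `𝒢₁ ⋈ 𝒢₂` via the canonical
embeddings. -/
noncomputable def connectorOf (𝒢₁ : Gpd U G₁) (𝒢₂ : Gpd U G₂)
    (M : MatchedPair 𝒢₁ 𝒢₂) (c : G₁ × G₂ → G₁ × G₂ → Circle)
    (g : G₂) (x : G₁) : Circle :=
  c (iota₂ 𝒢₁ 𝒢₂ g) (iota₁ 𝒢₁ 𝒢₂ x) *
    (c (iota₁ 𝒢₁ 𝒢₂ (M.act g x)) (iota₂ 𝒢₁ 𝒢₂ (M.res g x)))⁻¹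


section AuxiliaryLemmas

/-- Idempotents in a groupoid are units. -/
theorem Gpd.idem {G : Type*} (𝒢 : Gpd U G) (a : G) (h1 : 𝒢.s a = 𝒢.r a)
    (h2 : 𝒢.mul a a = a) : a = 𝒢.unit (𝒢.s a) := by
  have h3 : 𝒢.mul (𝒢.mul a a) (𝒢.inv a) = 𝒢.mul a (𝒢.mul a (𝒢.inv a)) :=
    𝒢.mul_assoc a a (𝒢.inv a) h1 (by rw [𝒢.r_inv])
  rw [h2, 𝒢.mul_inv, ← h1, 𝒢.mul_unit] at h3
  exact h3.symm

variable (𝒢₁ : Gpd U G₁) (𝒢₂ : Gpd U G₂) (M : MatchedPair 𝒢₁ 𝒢₂)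

theorem MatchedPair.res_unit_left_s14 (y : G₁) :
    M.res (𝒢₂.unit (𝒢₁.r y)) y = 𝒢₂.unit (𝒢₁.s y) := by
  have hsu : 𝒢₂.s (𝒢₂.unit (𝒢₁.r y)) = 𝒢₁.r y := by rw [𝒢₂.s_unit]
  have hact : M.act (𝒢₂.unit (𝒢₁.r y)) y = y := M.zs3 y
  have h9 := M.zs9 (𝒢₂.unit (𝒢₁.r y)) (𝒢₂.unit (𝒢₁.r y)) y
    (by rw [𝒢₂.s_unit, 𝒢₂.r_unit]) hsu
  rw [hact] at h9
  have hmu : 𝒢₂.mul (𝒢₂.unit (𝒢₁.r y)) (𝒢₂.unit (𝒢₁.r y)) = 𝒢₂.unit (𝒢₁.r y) := by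
    have := 𝒢₂.mul_unit (𝒢₂.unit (𝒢₁.r y)); rwa [𝒢₂.s_unit] at this
  rw [hmu] at h9
  have hsa : 𝒢₂.s (M.res (𝒢₂.unit (𝒢₁.r y)) y) = 𝒢₁.s y := M.zs5 _ _ hsu
  have hra : 𝒢₂.r (M.res (𝒢₂.unit (𝒢₁.r y)) y) = 𝒢₁.s y := by
    have h7 := M.zs7 (𝒢₂.unit (𝒢₁.r y)) y hsu
    rw [hact] at h7; exact h7.symm
  have := 𝒢₂.idem (M.res (𝒢₂.unit (𝒢₁.r y)) y) (by rw [hsa, hra]) h9.symm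
  rw [hsa] at this; exact this

theorem zsMul_iota₁_iota₁ (x y : G₁) (h : 𝒢₁.s x = 𝒢₁.r y) :
    zsMul 𝒢₁ 𝒢₂ M (iota₁ 𝒢₁ 𝒢₂ x) (iota₁ 𝒢₁ 𝒢₂ y) = iota₁ 𝒢₁ 𝒢₂ (𝒢₁.mul x y) := by
  simp only [zsMul, iota₁, h]
  rw [M.zs3 y, M.res_unit_left_s14 𝒢₁ 𝒢₂ y]
  have hm : 𝒢₂.mul (𝒢₂.unit (𝒢₁.s y)) (𝒢₂.unit (𝒢₁.s y)) = 𝒢₂.unit (𝒢₁.s y) := by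
    have := 𝒢₂.mul_unit (𝒢₂.unit (𝒢₁.s y)); rwa [𝒢₂.s_unit] at this
  rw [hm, 𝒢₁.s_mul x y h]

theorem zsMul_iota₂_iota₁ (g : G₂) (x : G₁) (h : 𝒢₂.s g = 𝒢₁.r x) :
    zsMul 𝒢₁ 𝒢₂ M (iota₂ 𝒢₁ 𝒢₂ g) (iota₁ 𝒢₁ 𝒢₂ x) = (M.act g x, M.res g x) := by
  simp only [zsMul, iota₂, iota₁]
  have h1 : 𝒢₁.mul (𝒢₁.unit (𝒢₂.r g)) (M.act g x) = M.act g x := by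
    have := 𝒢₁.unit_mul (M.act g x); rwa [M.zs2 g x h] at this
  have h2 : 𝒢₂.mul (M.res g x) (𝒢₂.unit (𝒢₁.s x)) = M.res g x := by
    have := 𝒢₂.mul_unit (M.res g x); rwa [M.zs5 g x h] at this
  rw [h1, h2]

theorem zsMul_iota₁_iota₂ (x : G₁) (g : G₂) (h : 𝒢₁.s x = 𝒢₂.r g) :
    zsMul 𝒢₁ 𝒢₂ M (iota₁ 𝒢₁ 𝒢₂ x) (iota₂ 𝒢₁ 𝒢₂ g) = (x, g) := by
  simp only [zsMul, iota₁, iota₂, h]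
  have hact : M.act (𝒢₂.unit (𝒢₂.r g)) (𝒢₁.unit (𝒢₂.r g)) = 𝒢₁.unit (𝒢₂.r g) := by
    have := M.zs3 (𝒢₁.unit (𝒢₂.r g)); rwa [𝒢₁.r_unit] at this
  have hres : M.res (𝒢₂.unit (𝒢₂.r g)) (𝒢₁.unit (𝒢₂.r g)) = 𝒢₂.unit (𝒢₂.r g) := by
    have := M.zs6 (𝒢₂.unit (𝒢₂.r g)); rwa [𝒢₂.s_unit] at this
  rw [hact, hres]
  have h1 : 𝒢₁.mul x (𝒢₁.unit (𝒢₂.r g)) = x := by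
    have := 𝒢₁.mul_unit x; rwa [h] at this
  have h2 : 𝒢₂.mul (𝒢₂.unit (𝒢₂.r g)) g = g := 𝒢₂.unit_mul g
  rw [h1, h2]

theorem circle_solve (a b d e f h i j k l : Circle)
    (h1 : a * b = d * e) (h2 : f * h = d * i) (h3 : f * j = k * l) :
    a * k⁻¹ * b = e * i⁻¹ * (h * j⁻¹) * l := by
  have H1 : (a : ℂ) * b = (d : ℂ) * e := by exact_mod_cast congrArg Subtype.val h1
  have H2 : (f : ℂ) * h = (d : ℂ) * i := by exact_mod_cast congrArg Subtype.val h2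
  have H3 : (f : ℂ) * j = (k : ℂ) * l := by exact_mod_cast congrArg Subtype.val h3
  ext
  push_cast
  field_simp
  linear_combination (i : ℂ) * j * H1 - (e : ℂ) * j * H2 + (e : ℂ) * h * H3

end AuxiliaryLemmas

/-- If `c` is a normalized 2-cocycle on the Zappa–Szép product
`𝒢 = 𝒢₁ ⋈ 𝒢₂`, then `φ(g,x) = c(g,x) conj(c(g ▷ x, g ◁ x))` satisfies condition
(CC2): for all `g` and composable `(x,y)` with `s(g) = r(x)`,
`φ(g,xy) c(x,y) = φ(g,x) φ(g ◁ x, y) c(g ▷ x, (g ◁ x) ▷ y)`,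
where elements of `𝒢ᵢ` are viewed in `𝒢` via the canonical embeddings. -/
theorem connectorOf_CC2
    (𝒢₁ : Gpd U G₁) (𝒢₂ : Gpd U G₂) (M : MatchedPair 𝒢₁ 𝒢₂)
    (c : G₁ × G₂ → G₁ × G₂ → Circle)
    -- `c` is normalized:
    (hnorm₁ : ∀ p : G₁ × G₂, 𝒢₁.s p.1 = 𝒢₂.r p.2 →
      c (𝒢₁.unit (𝒢₁.r p.1), 𝒢₂.unit (𝒢₁.r p.1)) p = 1)
    (hnorm₂ : ∀ p : G₁ × G₂, 𝒢₁.s p.1 = 𝒢₂.r p.2 →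
      c p (𝒢₁.unit (𝒢₂.s p.2), 𝒢₂.unit (𝒢₂.s p.2)) = 1)
    -- `c` satisfies the cocycle identity on `𝒢₁ ⋈ 𝒢₂`:
    (hcoc : ∀ p q k : G₁ × G₂,
      𝒢₁.s p.1 = 𝒢₂.r p.2 → 𝒢₁.s q.1 = 𝒢₂.r q.2 → 𝒢₁.s k.1 = 𝒢₂.r k.2 →
      𝒢₂.s p.2 = 𝒢₁.r q.1 → 𝒢₂.s q.2 = 𝒢₁.r k.1 →
      c p (zsMul 𝒢₁ 𝒢₂ M q k) * c q k = c (zsMul 𝒢₁ 𝒢₂ M p q) k * c p q) :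
    ∀ g x y, 𝒢₂.s g = 𝒢₁.r x → 𝒢₁.s x = 𝒢₁.r y →
      connectorOf 𝒢₁ 𝒢₂ M c g (𝒢₁.mul x y) * c (iota₁ 𝒢₁ 𝒢₂ x) (iota₁ 𝒢₁ 𝒢₂ y) =
        connectorOf 𝒢₁ 𝒢₂ M c g x * connectorOf 𝒢₁ 𝒢₂ M c (M.res g x) y *
          c (iota₁ 𝒢₁ 𝒢₂ (M.act g x)) (iota₁ 𝒢₁ 𝒢₂ (M.act (M.res g x) y)) := by
  intro g x y hgx hxy
  have h7 : 𝒢₁.s (M.act g x) = 𝒢₂.r (M.res g x) := M.zs7 g x hgx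
  have hresx : 𝒢₂.s (M.res g x) = 𝒢₁.r y := by rw [M.zs5 g x hgx]; exact hxy
  have h7' : 𝒢₁.s (M.act (M.res g x) y) = 𝒢₂.r (M.res (M.res g x) y) :=
    M.zs7 _ y hresx
  have hr2 : 𝒢₁.r (M.act (M.res g x) y) = 𝒢₂.r (M.res g x) := M.zs2 _ y hresx
  have hgxy_act : M.act g (𝒢₁.mul x y)
      = 𝒢₁.mul (M.act g x) (M.act (M.res g x) y) := M.zs8 g x y hgx hxy
  have hgxy_res : M.res g (𝒢₁.mul x y) = M.res (M.res g x) y := M.zs4 g x y hgx hxy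
  have hι₁ : ∀ z : G₁, 𝒢₁.s (iota₁ 𝒢₁ 𝒢₂ z).1 = 𝒢₂.r (iota₁ 𝒢₁ 𝒢₂ z).2 := by
    intro z; simp [iota₁, 𝒢₂.r_unit]
  have hι₂ : ∀ w : G₂, 𝒢₁.s (iota₂ 𝒢₁ 𝒢₂ w).1 = 𝒢₂.r (iota₂ 𝒢₁ 𝒢₂ w).2 := by
    intro w; simp [iota₂, 𝒢₁.s_unit]
  -- Triple A
  have hA := hcoc (iota₂ 𝒢₁ 𝒢₂ g) (iota₁ 𝒢₁ 𝒢₂ x) (iota₁ 𝒢₁ 𝒢₂ y)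
    (hι₂ g) (hι₁ x) (hι₁ y)
    (by simpa [iota₂, iota₁] using hgx)
    (by simp only [iota₁]; rw [𝒢₂.s_unit]; exact hxy)
  rw [zsMul_iota₁_iota₁ 𝒢₁ 𝒢₂ M x y hxy, zsMul_iota₂_iota₁ 𝒢₁ 𝒢₂ M g x hgx] at hA
  -- Triple B
  have hB := hcoc (iota₁ 𝒢₁ 𝒢₂ (M.act g x)) (iota₂ 𝒢₁ 𝒢₂ (M.res g x)) (iota₁ 𝒢₁ 𝒢₂ y)
    (hι₁ _) (hι₂ _) (hι₁ y)
    (by simp only [iota₁, iota₂]; rw [𝒢₂.s_unit, 𝒢₁.r_unit]; exact h7)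
    (by simpa [iota₂, iota₁] using hresx)
  rw [zsMul_iota₂_iota₁ 𝒢₁ 𝒢₂ M (M.res g x) y hresx,
    zsMul_iota₁_iota₂ 𝒢₁ 𝒢₂ M (M.act g x) (M.res g x) h7] at hB
  -- Triple C
  have hpq : 𝒢₁.s (M.act g x) = 𝒢₁.r (M.act (M.res g x) y) := by rw [h7, ← hr2]
  have hC := hcoc (iota₁ 𝒢₁ 𝒢₂ (M.act g x)) (iota₁ 𝒢₁ 𝒢₂ (M.act (M.res g x) y))
    (iota₂ 𝒢₁ 𝒢₂ (M.res (M.res g x) y))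
    (hι₁ _) (hι₁ _) (hι₂ _)
    (by simp only [iota₁]; rw [𝒢₂.s_unit]; exact hpq)
    (by simp only [iota₁, iota₂]; rw [𝒢₂.s_unit, 𝒢₁.r_unit]; exact h7')
  rw [zsMul_iota₁_iota₂ 𝒢₁ 𝒢₂ M (M.act (M.res g x) y) (M.res (M.res g x) y) h7',
    zsMul_iota₁_iota₁ 𝒢₁ 𝒢₂ M (M.act g x) (M.act (M.res g x) y) hpq,
    ← hgxy_act] at hC
  simp only [connectorOf, hgxy_res, hgxy_act] at *
  exact circle_solve _ _ _ _ _ _ _ _ _ _ hA hB hC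
end

section
/- Let $(\Sigma_1, \Sigma_2)$ be an internal Zappa–Szép structure for a twist $(\Sigma, \jmath, \pi)$ over $\mathcal{G}$, and suppose $(f, e) \in \Sigma_2 \tensor[_s]{\times}{_r} \Sigma_1$ with $fe = e'f'$ for some $(e', f') \in \Sigma_1 \tensor[_s]{\times}{_r} \Sigma_2$. Then $\{(e'', f'') \in \Sigma_1 \tensor[_s]{\times}{_r}\Sigma_2 : fe = e''f''\} = \{(z \cdot e', \bar{z} \cdot f') : z \in \mathbb{T}\}$; that is, the decomposition of $fe$ into $\Sigma_1 \cdot \Sigma_2$ form is unique up to the circle action. -/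
/-- A twist `𝕋 × 𝒰 → Σ → 𝒢` over a groupoid `𝒢`: a central extension of `𝒢`
by the trivial circle bundle over the unit space `U`. -/
structure TwistStr {U S G : Type*} [TopologicalSpace U] [TopologicalSpace S]
    [TopologicalSpace G] (SG : Gpd U S) (GG : Gpd U G) where
  j : Circle → U → S
  π : S → G
  j_r : ∀ z u, SG.r (j z u) = u
  j_s : ∀ z u, SG.s (j z u) = u
  j_one : ∀ u, j 1 u = SG.unit u
  j_mul : ∀ z w u, SG.mul (j z u) (j w u) = j (z * w) u
  j_inj : Function.Injective fun p : Circle × U => j p.1 p.2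
  j_cont : Continuous fun p : Circle × U => j p.1 p.2
  π_r : ∀ e, GG.r (π e) = SG.r e
  π_s : ∀ e, GG.s (π e) = SG.s e
  π_mul : ∀ e f, SG.s e = SG.r f → π (SG.mul e f) = GG.mul (π e) (π f)
  π_inv : ∀ e, π (SG.inv e) = GG.inv (π e)
  π_unit : ∀ u, π (SG.unit u) = GG.unit u
  π_j : ∀ z u, π (j z u) = GG.unit u
  π_fiber : ∀ e, (∃ u, π e = GG.unit u) → ∃ z u, e = j z u
  π_cont : Continuous π
  π_open : IsOpenMap π
  π_surj : Function.Surjective π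
  central : ∀ (z : Circle) (e : S), SG.mul (j z (SG.r e)) e = SG.mul e (j z (SG.s e))

/-- A subgroupoid of a groupoid: a set of arrows closed under (composable)
multiplication and inversion. -/
def IsSubgpd {U S : Type*} (SG : Gpd U S) (A : Set S) : Prop :=
  (∀ e ∈ A, ∀ f ∈ A, SG.s e = SG.r f → SG.mul e f ∈ A) ∧ (∀ e ∈ A, SG.inv e ∈ A)

/-- The central circle action `z • e = j(z, r(e)) e` on a twist. -/
def TwistStr.smul {U S G : Type*} [TopologicalSpace U] [TopologicalSpace S]
    [TopologicalSpace G] {SG : Gpd U S} {GG : Gpd U G} (T : TwistStr SG GG)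
    (z : Circle) (e : S) : S :=
  SG.mul (T.j z (SG.r e)) e

section Aux

variable {U S G : Type*} [TopologicalSpace U] [TopologicalSpace S]
    [TopologicalSpace G] {SG : Gpd U S} {GG : Gpd U G} (T : TwistStr SG GG)

theorem TwistStr.r_smul (z : Circle) (e : S) : SG.r (T.smul z e) = SG.r e := by
  unfold TwistStr.smul
  rw [SG.r_mul _ _ (T.j_s z _), T.j_r]

theorem TwistStr.s_smul (z : Circle) (e : S) : SG.s (T.smul z e) = SG.s e := by
  unfold TwistStr.smul
  rw [SG.s_mul _ _ (T.j_s z _)]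

theorem TwistStr.smul_one (e : S) : T.smul 1 e = e := by
  unfold TwistStr.smul
  rw [T.j_one, SG.unit_mul]

theorem TwistStr.smul_smul (z w : Circle) (e : S) :
    T.smul z (T.smul w e) = T.smul (z * w) e := by
  unfold TwistStr.smul
  rw [SG.r_mul _ _ (T.j_s w _), T.j_r, ← SG.mul_assoc _ _ _ (by rw [T.j_s, T.j_r])
    (T.j_s w _), T.j_mul]

theorem TwistStr.smul_left_cancel {z : Circle} {x y : S} (h : x = T.smul z y) :
    y = T.smul z⁻¹ x := by
  rw [h, T.smul_smul, inv_mul_cancel, T.smul_one]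

end Aux

/-- Let `(Σ₁, Σ₂)` be an internal Zappa–Szép structure for a
twist `(Σ, j, π)`.  If `(f,e) ∈ Σ₂ ×ₛᵣ Σ₁` and `fe = e'f'` with
`(e',f') ∈ Σ₁ ×ₛᵣ Σ₂`, then the decompositions of `fe` into `Σ₁ ⋅ Σ₂` form are
exactly `{(z • e', z̄ • f') : z ∈ 𝕋}`. -/
theorem internal_zs_decomposition_unique_up_to_circle
    {U S G : Type*} [TopologicalSpace U] [TopologicalSpace S] [TopologicalSpace G]
    (SG : Gpd U S) (GG : Gpd U G) (T : TwistStr SG GG)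
    (A₁ A₂ : Set S)
    (hsub₁ : IsSubgpd SG A₁) (hsub₂ : IsSubgpd SG A₂)
    (hcl₁ : IsClosed A₁) (hcl₂ : IsClosed A₂)
    (hI1 : ∀ e : S, ∃ a ∈ A₁, ∃ b ∈ A₂, SG.s a = SG.r b ∧ e = SG.mul a b)
    (hI2 : A₁ ∩ A₂ = {e | ∃ z u, e = T.j z u})
    (f e : S) (hf : f ∈ A₂) (he : e ∈ A₁) (hfe : SG.s f = SG.r e)
    (e' f' : S) (he' : e' ∈ A₁) (hf' : f' ∈ A₂) (he'f' : SG.s e' = SG.r f')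
    (hdec : SG.mul f e = SG.mul e' f') :
    ∀ e'' f'' : S,
      (e'' ∈ A₁ ∧ f'' ∈ A₂ ∧ SG.s e'' = SG.r f'' ∧ SG.mul f e = SG.mul e'' f'') ↔
      (∃ z : Circle, e'' = T.smul z e' ∧ f'' = T.smul z⁻¹ f') := by
  intro e'' f''
  have hre' : SG.r e' = SG.r f := by
    rw [← SG.r_mul e' f' he'f', ← hdec, SG.r_mul f e hfe]
  have hsf' : SG.s f' = SG.s e := by
    rw [← SG.s_mul e' f' he'f', ← hdec, SG.s_mul f e hfe]
  constructor
  · rintro ⟨h1, h2, h3, h4⟩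
    have hre'' : SG.r e'' = SG.r f := by
      rw [← SG.r_mul e'' f'' h3, ← h4, SG.r_mul f e hfe]
    have hr : SG.r e'' = SG.r e' := by rw [hre'', hre']
    -- a = (e'')⁻¹ e'
    set a := SG.mul (SG.inv e'') e' with ha_def
    have hcomp1 : SG.s (SG.inv e'') = SG.r e' := by rw [SG.s_inv, hr]
    have ha1 : a ∈ A₁ := hsub₁.1 _ (hsub₁.2 _ h1) _ he' hcomp1
    have hsa : SG.s a = SG.r f' := by rw [ha_def, SG.s_mul _ _ hcomp1, he'f']
    have hra : SG.r a = SG.s e'' := by rw [ha_def, SG.r_mul _ _ hcomp1, SG.r_inv]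
    have haf' : SG.mul a f' = f'' := by
      rw [ha_def, SG.mul_assoc _ _ _ hcomp1 he'f', ← hdec, h4,
        ← SG.mul_assoc _ _ _ (by rw [SG.s_inv]) h3, SG.inv_mul, h3, SG.unit_mul]
    have ha2 : a ∈ A₂ := by
      have : a = SG.mul f'' (SG.inv f') := by
        have := congrArg (fun x => SG.mul x (SG.inv f')) haf'
        rw [SG.mul_assoc _ _ _ hsa (by rw [SG.r_inv]), SG.mul_inv, ← hsa,
          SG.mul_unit] at this
        exact this
      rw [this]
      exact hsub₂.1 _ h2 _ (hsub₂.2 _ hf')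
        (by rw [SG.r_inv, ← SG.s_mul e'' f'' h3, ← h4, SG.s_mul f e hfe, ← hsf'])
    obtain ⟨z, u, hzu⟩ : ∃ z u, a = T.j z u := by
      have : a ∈ A₁ ∩ A₂ := ⟨ha1, ha2⟩
      rwa [hI2] at this
    have hu1 : u = SG.s e'' := by rw [← hra, hzu, T.j_r]
    have hu2 : u = SG.r f' := by rw [← hsa, hzu, T.j_s]
    have he'eq : e' = T.smul z e'' := by
      have : SG.mul e'' a = e' := by
        rw [ha_def, ← SG.mul_assoc _ _ _ (SG.r_inv e'').symm hcomp1, SG.mul_inv,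
          hr, SG.unit_mul]
      rw [← this, hzu, hu1, ← T.central z e'']
      rfl
    refine ⟨z⁻¹, T.smul_left_cancel he'eq, ?_⟩
    rw [inv_inv, ← haf', hzu, hu2]
    rfl
  · rintro ⟨z, h1, h2⟩
    have hj1 : ∀ (w : Circle) (u : U), T.j w u ∈ A₁ := fun w u =>
      (Set.ext_iff.mp hI2 (T.j w u)).mpr ⟨w, u, rfl⟩ |>.1
    have hj2 : ∀ (w : Circle) (u : U), T.j w u ∈ A₂ := fun w u =>
      (Set.ext_iff.mp hI2 (T.j w u)).mpr ⟨w, u, rfl⟩ |>.2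
    have he''1 : e'' ∈ A₁ := by
      rw [h1]; exact hsub₁.1 _ (hj1 z _) _ he' (T.j_s z _)
    have hf''2 : f'' ∈ A₂ := by
      rw [h2]; exact hsub₂.1 _ (hj2 z⁻¹ _) _ hf' (T.j_s _ _)
    have hscomp : SG.s e'' = SG.r f'' := by
      rw [h1, h2, T.s_smul, T.r_smul, he'f']
    refine ⟨he''1, hf''2, hscomp, ?_⟩
    rw [hdec, h1, h2]
    unfold TwistStr.smul
    calc SG.mul e' f'
        = SG.mul e' (SG.mul (SG.mul (T.j z (SG.s e')) (T.j z⁻¹ (SG.s e'))) f') := by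
          rw [T.j_mul, mul_inv_cancel, T.j_one, he'f', SG.unit_mul]
      _ = SG.mul e' (SG.mul (T.j z (SG.s e')) (SG.mul (T.j z⁻¹ (SG.s e')) f')) := by
          rw [SG.mul_assoc _ _ _ (by rw [T.j_s, T.j_r]) (by rw [T.j_s, he'f'])]
      _ = SG.mul (SG.mul e' (T.j z (SG.s e'))) (SG.mul (T.j z⁻¹ (SG.s e')) f') := by
          rw [SG.mul_assoc e' _ _ (by rw [T.j_r])
            (by rw [T.j_s, SG.r_mul _ _ (by rw [T.j_s, he'f']), T.j_r])]
      _ = SG.mul (SG.mul (T.j z (SG.r e')) e') (SG.mul (T.j z⁻¹ (SG.r f')) f') := by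
          rw [T.central z e', he'f']
end

section
/- Let $(\Sigma_1, \Sigma_2)$ be an internal Zappa–Szép structure for a twist $(\Sigma, \jmath, \pi)$ over a groupoid $\mathcal{G}$, and set $\mathcal{G}_i := \pi(\Sigma_i)$. Then $\mathcal{G}_1 \cap \mathcal{G}_2 = \mathcal{U}$ and $\mathcal{G} = \mathcal{G}_1 \cdot \mathcal{G}_2$ with unique decompositions; i.e., $\mathcal{G}$ is the internal Zappa–Szép product $\mathcal{G}_1 \bowtie \mathcal{G}_2$. -/
section Aux

variable {U S G : Type*} [TopologicalSpace U] [TopologicalSpace S] [TopologicalSpace G]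
  {SG : Gpd U S} {GG : Gpd U G} (T : TwistStr SG GG)

/-- Two elements of the twist in the same fiber differ by a central circle element. -/
lemma twist_fiber_eq {e e' : S} (h : T.π e = T.π e') :
    ∃ z, e = SG.mul (T.j z (SG.r e')) e' := by
  have hs : SG.s e = SG.s e' := by rw [← T.π_s, ← T.π_s, h]
  have hr : SG.r e = SG.r e' := by rw [← T.π_r, ← T.π_r, h]
  have hcomp : SG.s e = SG.r (SG.inv e') := by rw [SG.r_inv]; exact hs
  have hπf : T.π (SG.mul e (SG.inv e')) = GG.unit (GG.r (T.π e)) := by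
    rw [T.π_mul e (SG.inv e') hcomp, T.π_inv, ← h, GG.mul_inv]
  obtain ⟨z, u, hf⟩ := T.π_fiber _ ⟨_, hπf⟩
  have hu : u = SG.r e' := by
    rw [← hr, ← SG.r_mul e (SG.inv e') hcomp, hf, T.j_r]
  refine ⟨z, ?_⟩
  have hcomp2 : SG.s (SG.inv e') = SG.r e' := SG.s_inv e'
  calc e = SG.mul e (SG.unit (SG.s e)) := (SG.mul_unit e).symm
    _ = SG.mul e (SG.mul (SG.inv e') e') := by rw [hs, ← SG.inv_mul e']
    _ = SG.mul (SG.mul e (SG.inv e')) e' := (SG.mul_assoc _ _ _ hcomp hcomp2).symm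
    _ = SG.mul (T.j z (SG.r e')) e' := by rw [hf, hu]

/-- Cancellation: two factorizations of the same element of `Σ` have factors with
equal images in `𝒢`. -/
lemma twist_cancel {A₁ A₂ : Set S} (hsub₁ : IsSubgpd SG A₁) (hsub₂ : IsSubgpd SG A₂)
    (hI2 : A₁ ∩ A₂ = {e | ∃ z u, e = T.j z u})
    {a a' b b' : S} (ha : a ∈ A₁) (ha' : a' ∈ A₁) (hb : b ∈ A₂) (hb' : b' ∈ A₂)
    (hab : SG.s a = SG.r b) (hab' : SG.s a' = SG.r b')
    (heq : SG.mul a b = SG.mul a' b') :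
    T.π a = T.π a' ∧ T.π b = T.π b' := by
  have hra : SG.r a = SG.r a' := by
    rw [← SG.r_mul a b hab, ← SG.r_mul a' b' hab', heq]
  -- c = a'⁻¹ a
  set c := SG.mul (SG.inv a') a with hc
  have hcomp1 : SG.s (SG.inv a') = SG.r a := by rw [SG.s_inv, hra]
  have hcA₁ : c ∈ A₁ := hsub₁.1 _ (hsub₁.2 _ ha') _ ha hcomp1
  have hsc : SG.s c = SG.s a := SG.s_mul _ _ hcomp1
  -- c b = b'
  have hcb : SG.mul c b = b' := by
    calc SG.mul (SG.mul (SG.inv a') a) b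
        = SG.mul (SG.inv a') (SG.mul a b) := SG.mul_assoc _ _ _ hcomp1 hab
      _ = SG.mul (SG.inv a') (SG.mul a' b') := by rw [heq]
      _ = SG.mul (SG.mul (SG.inv a') a') b' := (SG.mul_assoc _ _ _ (by rw [SG.s_inv]) hab').symm
      _ = SG.mul (SG.unit (SG.s a')) b' := by rw [SG.inv_mul]
      _ = b' := by rw [hab']; exact SG.unit_mul b'
  have hscb : SG.s c = SG.r b := by rw [hsc, hab]
  -- c = b' b⁻¹ ∈ A₂
  have hcA₂ : c ∈ A₂ := by
    have hcbinv : c = SG.mul b' (SG.inv b) := by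
      calc c = SG.mul c (SG.unit (SG.s c)) := (SG.mul_unit c).symm
        _ = SG.mul c (SG.mul b (SG.inv b)) := by rw [hscb, ← SG.mul_inv b]
        _ = SG.mul (SG.mul c b) (SG.inv b) := (SG.mul_assoc _ _ _ hscb (by rw [SG.r_inv])).symm
        _ = SG.mul b' (SG.inv b) := by rw [hcb]
    rw [hcbinv]
    refine hsub₂.1 _ hb' _ (hsub₂.2 _ hb) ?_
    rw [SG.r_inv, ← SG.s_mul c b hscb, hcb]
  obtain ⟨z, u, hcj⟩ : ∃ z u, c = T.j z u := by
    have := hI2 ▸ Set.mem_inter hcA₁ hcA₂; exact this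
  have hrc : SG.r c = u := by rw [hcj, T.j_r]
  have hscu : SG.s c = u := by rw [hcj, T.j_s]
  -- π a = π a'
  have h1 : T.π a = T.π a' := by
    have hac : a = SG.mul a' c := by
      calc a = SG.mul (SG.unit (SG.r a)) a := (SG.unit_mul a).symm
        _ = SG.mul (SG.mul a' (SG.inv a')) a := by rw [SG.mul_inv, hra]
        _ = SG.mul a' c := SG.mul_assoc _ _ _ (by rw [SG.r_inv]) hcomp1
    have hcompac : SG.s a' = SG.r c := by
      rw [hab', ← hcb, SG.r_mul c b hscb]
    rw [hac, T.π_mul a' c hcompac, hcj, T.π_j]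
    have hu : u = GG.s (T.π a') := by
      rw [T.π_s, hcompac, hrc]
    rw [hu]; exact GG.mul_unit (T.π a')
  -- π b = π b'
  have h2 : T.π b = T.π b' := by
    rw [← hcb, T.π_mul c b hscb, hcj, T.π_j]
    have hu : u = GG.r (T.π b) := by rw [T.π_r, ← hab, ← hsc, hscu]
    rw [hu, GG.unit_mul]
  exact ⟨h1, h2⟩

end Aux

/-- Let `(Σ₁, Σ₂)` be an internal Zappa–Szép structure for a
twist `(Σ, j, π)` over `𝒢`, and set `𝒢ᵢ := π(Σᵢ)`.  Then `𝒢₁ ∩ 𝒢₂ = 𝒰` and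
every element of `𝒢` has a unique decomposition `x g` with `x ∈ 𝒢₁`, `g ∈ 𝒢₂`;
i.e. `𝒢` is the internal Zappa–Szép product `𝒢₁ ⋈ 𝒢₂`. -/
theorem internal_zs_base_is_zs_product
    {U S G : Type*} [TopologicalSpace U] [TopologicalSpace S] [TopologicalSpace G]
    (SG : Gpd U S) (GG : Gpd U G) (T : TwistStr SG GG)
    (A₁ A₂ : Set S)
    (hsub₁ : IsSubgpd SG A₁) (hsub₂ : IsSubgpd SG A₂)
    (hcl₁ : IsClosed A₁) (hcl₂ : IsClosed A₂)
    (hI1 : ∀ e : S, ∃ a ∈ A₁, ∃ b ∈ A₂, SG.s a = SG.r b ∧ e = SG.mul a b)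
    (hI2 : A₁ ∩ A₂ = {e | ∃ z u, e = T.j z u}) :
    (T.π '' A₁) ∩ (T.π '' A₂) = Set.range GG.unit ∧
    ∀ k : G, ∃! p : G × G,
      p.1 ∈ T.π '' A₁ ∧ p.2 ∈ T.π '' A₂ ∧ GG.s p.1 = GG.r p.2 ∧
        k = GG.mul p.1 p.2 := by
  have hjA : ∀ z u, T.j z u ∈ A₁ ∩ A₂ := by
    intro z u; rw [hI2]; exact ⟨z, u, rfl⟩
  constructor
  · -- intersection is the unit space
    ext k
    constructor
    · rintro ⟨⟨a, ha, rfl⟩, b, hb, hba⟩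
      obtain ⟨z, haz⟩ := twist_fiber_eq T hba.symm
      have hjmem := hjA z (SG.r b)
      have haA₂ : a ∈ A₂ := by
        rw [haz]
        exact hsub₂.1 _ hjmem.2 _ hb (by rw [T.j_s])
      obtain ⟨w, v, hav⟩ : ∃ w v, a = T.j w v := by
        have := hI2 ▸ Set.mem_inter ha haA₂; exact this
      exact ⟨v, by rw [hav, T.π_j]⟩
    · rintro ⟨u, rfl⟩
      have hjmem := hjA 1 u
      exact ⟨⟨T.j 1 u, hjmem.1, T.π_j 1 u⟩, ⟨T.j 1 u, hjmem.2, T.π_j 1 u⟩⟩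
  · -- unique factorization
    intro k
    obtain ⟨e, rfl⟩ := T.π_surj k
    obtain ⟨a, ha, b, hb, hcomp, rfl⟩ := hI1 e
    refine ⟨(T.π a, T.π b), ⟨⟨a, ha, rfl⟩, ⟨b, hb, rfl⟩, ?_, ?_⟩, ?_⟩
    · rw [T.π_s, T.π_r, hcomp]
    · exact T.π_mul a b hcomp
    · rintro ⟨x, g⟩ ⟨⟨a', ha', rfl⟩, ⟨b', hb', rfl⟩, hsr, hk⟩
      simp only at hsr hk ⊢
      have hcomp' : SG.s a' = SG.r b' := by rw [← T.π_s, ← T.π_r, hsr]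
      have hπeq : T.π (SG.mul a' b') = T.π (SG.mul a b) := by
        rw [T.π_mul a' b' hcomp', ← hk, T.π_mul a b hcomp]
      obtain ⟨z, hez⟩ := twist_fiber_eq T hπeq
      have hru : SG.r (SG.mul a b) = SG.r a := SG.r_mul a b hcomp
      have hjmem := hjA z (SG.r (SG.mul a b))
      have hcj : SG.s (T.j z (SG.r (SG.mul a b))) = SG.r a := by rw [T.j_s, hru]
      have hez' : SG.mul a' b' = SG.mul (SG.mul (T.j z (SG.r (SG.mul a b))) a) b := by
        rw [hez, ← SG.mul_assoc _ _ _ hcj hcomp]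
      have haA : SG.mul (T.j z (SG.r (SG.mul a b))) a ∈ A₁ :=
        hsub₁.1 _ hjmem.1 _ ha hcj
      have hcomp'' : SG.s (SG.mul (T.j z (SG.r (SG.mul a b))) a) = SG.r b := by
        rw [SG.s_mul _ _ hcj, hcomp]
      obtain ⟨h1, h2⟩ := twist_cancel T hsub₁ hsub₂ hI2 ha' haA hb' hb hcomp' hcomp'' hez'
      have hπa : T.π (SG.mul (T.j z (SG.r (SG.mul a b))) a) = T.π a := by
        rw [T.π_mul _ _ hcj, T.π_j]
        have : SG.r (SG.mul a b) = GG.r (T.π a) := by rw [T.π_r, hru]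
        rw [this, GG.unit_mul]
      exact Prod.ext (by rw [h1, hπa]) h2
end

section
/- Let $D$ be a Cartan subalgebra of a C*-algebra $A$, $n \in N_A(D)$ a normalizer, and $\alpha_n: \mathrm{dom}(n) \to \mathrm{dom}(n^*)$ the unique homeomorphism satisfying $n^* d n(x) = d(\alpha_n(x))\, n^*n(x)$ for all $d \in D$ and $x \in \mathrm{dom}(n)$. If $m \in N_A(D)$ and there exist $f, g \in D$ with $f(x) \neq 0 \neq g(x)$ and $nf = mg$, then $x \in \mathrm{dom}(m)$ and $\alpha_n(x) = \alpha_m(x)$. -/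
/-- Let `D` be a Cartan subalgebra of a C*-algebra `A`, let
`n` be a normalizer of `D` with associated partial homeomorphism `α_n` of the
spectrum of `D` (characterized by `(n* d n)(x) = d(α_n(x)) (n* n)(x)` on
`dom(n) = {x : (n* n)(x) > 0}`).  If `m` is a normalizer and `f, g ∈ D` satisfy
`f(x) ≠ 0 ≠ g(x)` and `n f = m g`, then `x ∈ dom(m)` and `α_n(x) = α_m(x)`. -/
theorem cartan_normalizer_partial_homeo_agree
    {A : Type*} [NormedRing A] [StarRing A] [CStarRing A]
    [NormedAlgebra ℂ A] [StarModule ℂ A] [CompleteSpace A]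
    (D : StarSubalgebra ℂ A)
    -- `D` is a Cartan subalgebra:
    (hcomm : ∀ a b : D, a * b = b * a)
    (hmax : ∀ a : A, (∀ d ∈ D, a * d = d * a) → a ∈ D)
    (hexp : ∃ P : A →ₗ[ℂ] A, (∀ a, P a ∈ D) ∧ (∀ d ∈ D, P d = d) ∧
      (∀ a : A, P (star a * a) = 0 → a = 0))
    (hgen : closure
      (↑(StarAlgebra.adjoin ℂ
        {a : A | ∀ d ∈ D, a * d * star a ∈ D ∧ star a * d * a ∈ D}) : Set A)
      = Set.univ)
    -- normalizers `n` and `m`: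
    (n m : A)
    (hnN : ∀ d ∈ D, n * d * star n ∈ D ∧ star n * d * n ∈ D)
    (hmN : ∀ d ∈ D, m * d * star m ∈ D ∧ star m * d * m ∈ D)
    (hnn : star n * n ∈ D) (hmm : star m * m ∈ D)
    -- the partial homeomorphisms `α_n`, `α_m` on characters of `D`,
    -- with their defining property on `dom(n)` resp. `dom(m)`:
    (αn αm : (D →⋆ₐ[ℂ] ℂ) → (D →⋆ₐ[ℂ] ℂ))
    (hαn : ∀ x : D →⋆ₐ[ℂ] ℂ, 0 < (x ⟨star n * n, hnn⟩).re → ∀ d : D,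
      x ⟨star n * (d : A) * n, (hnN (d : A) d.2).2⟩ = αn x d * x ⟨star n * n, hnn⟩)
    (hαm : ∀ x : D →⋆ₐ[ℂ] ℂ, 0 < (x ⟨star m * m, hmm⟩).re → ∀ d : D,
      x ⟨star m * (d : A) * m, (hmN (d : A) d.2).2⟩ = αm x d * x ⟨star m * m, hmm⟩)
    -- a character `x ∈ dom(n)` and `f, g ∈ D` with `f(x) ≠ 0 ≠ g(x)`, `nf = mg`:
    (x : D →⋆ₐ[ℂ] ℂ)
    (hx : 0 < (x ⟨star n * n, hnn⟩).re)
    (f g : D) (hf : x f ≠ 0) (hg : x g ≠ 0)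
    (heq : n * (f : A) = m * (g : A)) :
    0 < (x ⟨star m * m, hmm⟩).re ∧ αn x = αm x := by

  classical
  set Nd : D := (⟨star n * n, hnn⟩ : D) with hNd
  set Md : D := (⟨star m * m, hmm⟩ : D) with hMd
  -- key algebraic identity in `A` for any `d : D`
  have keyA : ∀ d : A, star (f : A) * (star n * d * n) * f
      = star (g : A) * (star m * d * m) * g := by
    intro d
    calc star (f : A) * (star n * d * n) * f
        = star (n * (f : A)) * d * (n * (f : A)) := by
          rw [star_mul]; simp only [mul_assoc]
      _ = star (m * (g : A)) * d * (m * (g : A)) := by rw [heq]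
      _ = star (g : A) * (star m * d * m) * g := by
          rw [star_mul]; simp only [mul_assoc]
  -- the corresponding identity in `D` (with `d = 1` for E1)
  have hE1 : (star f * Nd * f : D) = star g * Md * g := by
    apply Subtype.ext
    have := keyA 1
    simp only [mul_one] at this
    simpa using this
  have hxE1 : star (x f) * x Nd * x f = star (x g) * x Md * x g := by
    have := congrArg x hE1
    simpa only [map_mul, map_star] using this
  have hnf : star (x f) * x Nd * x f ≠ 0 := by
    have hN0 : x Nd ≠ 0 := fun h => by simp [h] at hx
    exact mul_ne_zero (mul_ne_zero (star_ne_zero.mpr hf) hN0) hf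
  have hN0 : x Nd ≠ 0 := fun h => by simp [h] at hx
  -- positivity of `x Md`
  have h1 : (Complex.normSq (x f) : ℂ) * x Nd = (Complex.normSq (x g) : ℂ) * x Md := by
    rw [Complex.normSq_eq_conj_mul_self, Complex.normSq_eq_conj_mul_self]
    calc (starRingEnd ℂ) (x f) * x f * x Nd = star (x f) * x Nd * x f := by
          rw [Complex.star_def]; ring
      _ = star (x g) * x Md * x g := hxE1
      _ = (starRingEnd ℂ) (x g) * x g * x Md := by rw [Complex.star_def]; ring
  have hMpos : 0 < (x Md).re := by
    have h2 : Complex.normSq (x f) * (x Nd).re = Complex.normSq (x g) * (x Md).re := by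
      have := congrArg Complex.re h1
      simpa [Complex.re_ofReal_mul] using this
    have hfpos : 0 < Complex.normSq (x f) := Complex.normSq_pos.mpr hf
    have hgpos : 0 < Complex.normSq (x g) := Complex.normSq_pos.mpr hg
    nlinarith
  refine ⟨hMpos, ?_⟩
  ext d
  have hE2 : (star f * (⟨star n * (d : A) * n, (hnN (d : A) d.2).2⟩ : D) * f : D)
      = star g * (⟨star m * (d : A) * m, (hmN (d : A) d.2).2⟩ : D) * g := by
    apply Subtype.ext
    simpa using keyA (d : A)
  have hxE2 : star (x f) * x (⟨star n * (d : A) * n, (hnN (d : A) d.2).2⟩ : D) * x f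
      = star (x g) * x (⟨star m * (d : A) * m, (hmN (d : A) d.2).2⟩ : D) * x g := by
    have := congrArg x hE2
    simpa only [map_mul, map_star] using this
  rw [hαn x hx d, hαm x hMpos d] at hxE2
  have hxE2' : αn x d * (star (x f) * x Nd * x f) = αm x d * (star (x g) * x Md * x g) := by
    linear_combination hxE2
  rw [← hxE1] at hxE2'
  exact mul_right_cancel₀ hnf hxE2'
end
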